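/- Let G(x) be a q×q symmetric matrix with entries in ℝ[x_1,...,x_n], K = {x ∈ ℝ^n : G(x) ⪰ 0}, G̃(x) = diag(G(x), I_q − G(x)) the 2q×2q block-diagonal dilation, and let H(G) ⊆ ℝ[x_1,...,x_n] be the set of all polynomials of the form λ_0 + Σ_{k=1}^m ⟨Λ_k, G̃(x)^{⊗k}⟩ where m ∈ ℕ, λ_0 ≥ 0 is real, and each Λ_k is a (2q)^k × (2q)^k positive semidefinite real matrix. Suppose (i) K is compact and I_q − G(x) ⪰ 0 for all x ∈ K, and (ii) ℝ[x_1,...,x_n] = H(G) − H(G). Then the constant polynomial 1 lies in the algebraic interior of the convex set H(G): for every f ∈ ℝ[x_1,...,x_n] there exists ε_f > 0 such that 1 + λf ∈ H(G) for all real λ with |λ| < ε_f. -/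

import Mathlib

open scoped BigOperators

noncomputable section

/-- The `k`-fold Kronecker power of a matrix, with rows and columns indexed by
functions `Fin k → ι` (a type of cardinality `(#ι)^k`):
`(M^{⊗k})_{a,b} = ∏ᵢ M_{a i, b i}`. -/
def kronPow {ι : Type*} {R : Type*} [CommMonoid R] (M : Matrix ι ι R) (k : ℕ) :
    Matrix (Fin k → ι) (Fin k → ι) R :=
  Matrix.of fun a b => ∏ i, M (a i) (b i)

/-- Trace inner product `⟨Λ, B⟩ = tr(Λᵀ B) = ∑ᵢⱼ Λᵢⱼ Bᵢⱼ` of a real matrix against a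
polynomial matrix. -/
def tipP {n : ℕ} {ι : Type*} [Fintype ι] (Λ : Matrix ι ι ℝ)
    (B : Matrix ι ι (MvPolynomial (Fin n) ℝ)) : MvPolynomial (Fin n) ℝ :=
  ∑ i, ∑ j, MvPolynomial.C (Λ i j) * B i j

/-- The cone `H(G)` of all polynomials of the form
`λ₀ + ∑_{k=1}^m ⟨Λ_k, G(x)^{⊗k}⟩` with `λ₀ ≥ 0` and each `Λ_k` positive semidefinite. -/
def Hset {n : ℕ} {ι : Type*} [Fintype ι]
    (G : Matrix ι ι (MvPolynomial (Fin n) ℝ)) : Set (MvPolynomial (Fin n) ℝ) :=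
  { p | ∃ (m : ℕ) (lam0 : ℝ) (Λ : (k : ℕ) → Matrix (Fin k → ι) (Fin k → ι) ℝ),
      0 ≤ lam0 ∧ (∀ k ∈ Finset.Icc 1 m, (Λ k).PosSemidef) ∧
      p = MvPolynomial.C lam0 + ∑ k ∈ Finset.Icc 1 m, tipP (Λ k) (kronPow G k) }

/-- Entrywise evaluation of a polynomial matrix at a point `x`. -/
def evalMat {n : ℕ} {ι : Type*} (x : Fin n → ℝ)
    (B : Matrix ι ι (MvPolynomial (Fin n) ℝ)) : Matrix ι ι ℝ :=
  Matrix.of fun i j => MvPolynomial.eval x (B i j)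

/-- The dilated matrix `G̃(x) = diag(G(x), I_q − G(x))`, a `2q × 2q` block diagonal
polynomial matrix. -/
def dilate {n q : ℕ} (G : Matrix (Fin q) (Fin q) (MvPolynomial (Fin n) ℝ)) :
    Matrix (Fin q ⊕ Fin q) (Fin q ⊕ Fin q) (MvPolynomial (Fin n) ℝ) :=
  Matrix.fromBlocks G 0 0 (1 - G)

/-! The dilation `G̃ = diag(G, I − G)` has constant trace `q`, so `⟨I, G̃^{⊗k}⟩ = q^k`. For a
positive semidefinite `Λ` the matrix `tr(Λ) I − Λ` is again positive semidefinite, hence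
`tr(Λ) q^k − ⟨Λ, G̃^{⊗k}⟩ ∈ H(G)`: the constant `1` is an order unit of the convex cone `H(G)`,
i.e. every `h ∈ H(G)` has `N − h ∈ H(G)` for some constant `N`. Writing `f = h₁ − h₂` with
`N₂ − h₂ ∈ H(G)`, we get `1 + λ f = λ h₁ + λ (N₂ − h₂) + (1 − λ N₂)` in `H(G)` for small `λ ≥ 0`,
and symmetrically for `λ ≤ 0`. -/

open MvPolynomial Matrix Finset

namespace Matrix

open scoped ComplexOrder

variable {ι 𝕜 : Type*} [Fintype ι] [DecidableEq ι] [RCLike 𝕜]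

theorem IsHermitian.posSemidef_smul_one_sub {A : Matrix ι ι 𝕜} (hA : A.IsHermitian) {c : ℝ}
    (hc : ∀ i, hA.eigenvalues i ≤ c) : (c • (1 : Matrix ι ι 𝕜) - A).PosSemidef := by
  have hdiag : c • (1 : Matrix ι ι 𝕜) - A = Unitary.conjStarAlgAut 𝕜 _ hA.eigenvectorUnitary
      (diagonal (RCLike.ofReal ∘ fun i => c - hA.eigenvalues i)) := by
    conv_lhs => arg 2; rw [hA.spectral_theorem]
    have hshift : diagonal (RCLike.ofReal ∘ fun i => c - hA.eigenvalues i) =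
        (c : 𝕜) • (1 : Matrix ι ι 𝕜) - diagonal (RCLike.ofReal ∘ hA.eigenvalues) := by
      rw [smul_one_eq_diagonal, diagonal_sub]
      congr 1; ext i; simp
    rw [hshift, map_sub, map_smul, map_one, RCLike.real_smul_eq_coe_smul (K := 𝕜)]
  rw [hdiag, Unitary.conjStarAlgAut_apply, Unitary.isUnit_coe.posSemidef_star_right_conjugate_iff,
    posSemidef_diagonal_iff]
  intro i
  simpa using hc i

theorem PosSemidef.posSemidef_trace_smul_one_sub {A : Matrix ι ι ℝ} (hA : A.PosSemidef) :
    (A.trace • (1 : Matrix ι ι ℝ) - A).PosSemidef := by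
  refine hA.1.posSemidef_smul_one_sub fun i => ?_
  rw [hA.1.trace_eq_sum_eigenvalues]
  exact single_le_sum (fun j _ => hA.eigenvalues_nonneg j) (mem_univ i)

end Matrix

section TraceInnerProduct

variable {n : ℕ} {ι : Type*} [Fintype ι]

theorem tipP_add (Λ₁ Λ₂ : Matrix ι ι ℝ) (B : Matrix ι ι (MvPolynomial (Fin n) ℝ)) :
    tipP (Λ₁ + Λ₂) B = tipP Λ₁ B + tipP Λ₂ B := by
  simp [tipP, add_mul, sum_add_distrib]

theorem tipP_sub (Λ₁ Λ₂ : Matrix ι ι ℝ) (B : Matrix ι ι (MvPolynomial (Fin n) ℝ)) :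
    tipP (Λ₁ - Λ₂) B = tipP Λ₁ B - tipP Λ₂ B := by
  simp [tipP, sub_mul, sum_sub_distrib]

theorem tipP_zero (B : Matrix ι ι (MvPolynomial (Fin n) ℝ)) : tipP 0 B = 0 := by
  simp [tipP]

theorem tipP_smul (c : ℝ) (Λ : Matrix ι ι ℝ) (B : Matrix ι ι (MvPolynomial (Fin n) ℝ)) :
    tipP (c • Λ) B = c • tipP Λ B := by
  simp [tipP, smul_eq_C_mul, mul_sum, mul_assoc]

theorem tipP_one [DecidableEq ι] (B : Matrix ι ι (MvPolynomial (Fin n) ℝ)) :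
    tipP 1 B = B.trace := by
  simp [tipP, one_apply, Matrix.trace]

end TraceInnerProduct

theorem trace_kronPow {ι R : Type*} [Fintype ι] [CommSemiring R] (M : Matrix ι ι R) (k : ℕ) :
    (kronPow M k).trace = M.trace ^ k := by
  rw [Matrix.trace, Matrix.trace, sum_pow', Fintype.piFinset_univ]
  rfl

theorem trace_dilate {n q : ℕ} (G : Matrix (Fin q) (Fin q) (MvPolynomial (Fin n) ℝ)) :
    (dilate G).trace = C (q : ℝ) := by
  simp [dilate, Matrix.trace, Fintype.sum_sum_type, sum_sub_distrib]

section Hset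

variable {n : ℕ} {ι : Type*} [Fintype ι] {G : Matrix ι ι (MvPolynomial (Fin n) ℝ)}

theorem C_mem_Hset {c : ℝ} (hc : 0 ≤ c) : C c ∈ Hset G :=
  ⟨0, c, fun _ => 0, hc, by simp, by simp⟩

theorem exists_forall_ge_rep_of_mem_Hset {p : MvPolynomial (Fin n) ℝ} (hp : p ∈ Hset G) :
    ∃ m₀, ∀ m, m₀ ≤ m → ∃ (lam0 : ℝ) (Λ : (k : ℕ) → Matrix (Fin k → ι) (Fin k → ι) ℝ),
      0 ≤ lam0 ∧ (∀ k ∈ Icc 1 m, (Λ k).PosSemidef) ∧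
      p = C lam0 + ∑ k ∈ Icc 1 m, tipP (Λ k) (kronPow G k) := by
  obtain ⟨m₀, lam0, Λ, hlam0, hΛ, rfl⟩ := hp
  refine ⟨m₀, fun m hm => ⟨lam0, fun k => if k ∈ Icc 1 m₀ then Λ k else 0, hlam0, ?_, ?_⟩⟩
  · intro k _
    dsimp only
    split_ifs with hk
    exacts [hΛ k hk, PosSemidef.zero]
  · rw [← sum_subset (Icc_subset_Icc_right hm) fun k _ hk => by simp only [if_neg hk, tipP_zero]]
    exact congrArg _ (sum_congr rfl fun k hk => by simp only [if_pos hk])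

theorem add_mem_Hset {p p' : MvPolynomial (Fin n) ℝ} (hp : p ∈ Hset G) (hp' : p' ∈ Hset G) :
    p + p' ∈ Hset G := by
  obtain ⟨m₁, hm₁⟩ := exists_forall_ge_rep_of_mem_Hset hp
  obtain ⟨m₂, hm₂⟩ := exists_forall_ge_rep_of_mem_Hset hp'
  obtain ⟨a, Λ, ha, hΛ, rfl⟩ := hm₁ (max m₁ m₂) (le_max_left _ _)
  obtain ⟨a', Λ', ha', hΛ', rfl⟩ := hm₂ (max m₁ m₂) (le_max_right _ _)
  refine ⟨max m₁ m₂, a + a', fun k => Λ k + Λ' k, add_nonneg ha ha',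
    fun k hk => (hΛ k hk).add (hΛ' k hk), ?_⟩
  simp only [tipP_add, sum_add_distrib, map_add]
  ring

theorem smul_mem_Hset {p : MvPolynomial (Fin n) ℝ} {c : ℝ} (hc : 0 ≤ c) (hp : p ∈ Hset G) :
    c • p ∈ Hset G := by
  obtain ⟨m, a, Λ, ha, hΛ, rfl⟩ := hp
  refine ⟨m, c * a, fun k => c • Λ k, mul_nonneg hc ha, fun k hk => (hΛ k hk).smul hc, ?_⟩
  simp only [tipP_smul, smul_add, smul_sum, smul_eq_C_mul, map_mul]

variable (G) in
def HsetCone : PointedCone ℝ (MvPolynomial (Fin n) ℝ) where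
  carrier := Hset G
  add_mem' := add_mem_Hset
  zero_mem' := by simpa using C_mem_Hset (G := G) le_rfl
  smul_mem' c _ hp := smul_mem_Hset c.2 hp

@[simp]
theorem mem_HsetCone {p : MvPolynomial (Fin n) ℝ} : p ∈ HsetCone G ↔ p ∈ Hset G :=
  Iff.rfl

theorem exists_C_sub_mem_Hset {t : ℝ} (hG : G.trace = C t) {p : MvPolynomial (Fin n) ℝ}
    (hp : p ∈ Hset G) : ∃ N : ℝ, C N - p ∈ Hset G := by
  classical
  obtain ⟨m, a, Λ, ha, hΛ, rfl⟩ := hp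
  refine ⟨a + ∑ k ∈ Icc 1 m, (Λ k).trace * t ^ k, m, 0, fun k => (Λ k).trace • 1 - Λ k,
    le_rfl, fun k hk => (hΛ k hk).posSemidef_trace_smul_one_sub, ?_⟩
  simp only [tipP_sub, tipP_smul, tipP_one, trace_kronPow, hG, sum_sub_distrib, smul_eq_C_mul,
    map_add, map_sum, map_mul, map_pow, map_zero]
  ring

end Hset

namespace PointedCone

variable {E : Type*} [AddCommGroup E] [Module ℝ E] {H : PointedCone ℝ E} {e x y : E}

theorem add_smul_sub_mem {N t : ℝ} (ht : 0 ≤ t) (htN : t * N ≤ 1) (he : e ∈ H) (hx : x ∈ H)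
    (hy : N • e - y ∈ H) : e + t • (x - y) ∈ H := by
  have hsplit : e + t • (x - y) = t • x + t • (N • e - y) + (1 - t * N) • e := by module
  rw [hsplit]
  exact H.add_mem (H.add_mem (H.smul_mem ht hx) (H.smul_mem ht hy))
    (H.smul_mem (sub_nonneg.mpr htN) he)

theorem exists_pos_forall_abs_lt_add_smul_sub_mem (he : e ∈ H)
    (harch : ∀ z ∈ H, ∃ N : ℝ, N • e - z ∈ H) (hx : x ∈ H) (hy : y ∈ H) :
    ∃ ε : ℝ, 0 < ε ∧ ∀ t : ℝ, |t| < ε → e + t • (x - y) ∈ H := by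
  obtain ⟨N₁, hN₁⟩ := harch x hx
  obtain ⟨N₂, hN₂⟩ := harch y hy
  refine ⟨(|N₁| + |N₂| + 1)⁻¹, by positivity, fun t ht => ?_⟩
  have hbound : ∀ N, |N| ≤ |N₁| + |N₂| → |t| * N ≤ 1 := fun N hN => by
    rw [← one_div, lt_div_iff₀ (by positivity)] at ht
    nlinarith [abs_nonneg t, le_abs_self N]
  rcases le_total 0 t with ht₀ | ht₀
  · rw [← abs_of_nonneg ht₀]
    exact add_smul_sub_mem (abs_nonneg t) (hbound N₂ (by linarith [abs_nonneg N₁])) he hx hN₂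
  · have := add_smul_sub_mem (abs_nonneg t) (hbound N₁ (by linarith [abs_nonneg N₂])) he hy hN₁
    rwa [abs_of_nonpos ht₀, neg_smul, ← smul_neg, neg_sub] at this

end PointedCone

theorem one_mem_algebraic_interior_Hset_dilated_general {n q : ℕ}
    (G : Matrix (Fin q) (Fin q) (MvPolynomial (Fin n) ℝ))
    (hspan : ∀ p : MvPolynomial (Fin n) ℝ,
      ∃ h1 ∈ Hset (dilate G), ∃ h2 ∈ Hset (dilate G), p = h1 - h2) :
    ∀ f : MvPolynomial (Fin n) ℝ, ∃ ε : ℝ, 0 < ε ∧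
      ∀ lam : ℝ, |lam| < ε →
        1 + MvPolynomial.C lam * f ∈ Hset (dilate G) := by
  intro f
  obtain ⟨h₁, hh₁, h₂, hh₂, rfl⟩ := hspan f
  have harch (p) (hp : p ∈ HsetCone (dilate G)) : ∃ N : ℝ, N • 1 - p ∈ HsetCone (dilate G) := by
    simpa [smul_eq_C_mul] using exists_C_sub_mem_Hset (trace_dilate G) hp
  simpa [smul_eq_C_mul] using (HsetCone (dilate G)).exists_pos_forall_abs_lt_add_smul_sub_mem
    (C_mem_Hset zero_le_one) harch hh₁ hh₂

/-- Nonlinear case: if `K = {x : G(x) ⪰ 0}` is compact, `I_q − G(x) ⪰ 0` on `K`, and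
`ℝ[x] = H(G) − H(G)` (where `H(G)` is built from Kronecker powers of the dilation
`G̃ = diag(G, I − G)`), then the constant polynomial `1` is an algebraic interior point
of the convex cone `H(G)`. -/
theorem one_mem_algebraic_interior_Hset_dilated {n q : ℕ}
    (G : Matrix (Fin q) (Fin q) (MvPolynomial (Fin n) ℝ)) (hG : G.IsSymm)
    (K : Set (Fin n → ℝ))
    (hK : K = {x | (evalMat x G).PosSemidef})
    (hcomp : IsCompact K)
    (hIG : ∀ x ∈ K, ((1 : Matrix (Fin q) (Fin q) ℝ) - evalMat x G).PosSemidef)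
    (hspan : ∀ p : MvPolynomial (Fin n) ℝ,
      ∃ h1 ∈ Hset (dilate G), ∃ h2 ∈ Hset (dilate G), p = h1 - h2) :
    ∀ f : MvPolynomial (Fin n) ℝ, ∃ ε : ℝ, 0 < ε ∧
      ∀ lam : ℝ, |lam| < ε →
        1 + MvPolynomial.C lam * f ∈ Hset (dilate G) :=
  one_mem_algebraic_interior_Hset_dilated_general G hspan

end
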